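/- arXiv:2203.05454 — 4 statements merged into one kernel-verified Lean document; each statement's English description precedes it below -/
import Mathlib

section
/- Let G = (B,ψ,A) be a quantum graph with δ-form ψ, and ε_G := (1/δ²)(1⊗A)m*(1) its quantum edge indicator. Then for all x ∈ B, A(x) = δ² (ψ ⊗ id)(x · ε_G), where x · ε_G denotes the left action of x on the first tensor factor. -/
open scoped TensorProduct
open TensorProduct

noncomputable section


open scoped TensorProduct
open TensorProduct

noncomputable section

variable {B : Type*} [Ring B] [StarRing B] [Algebra ℂ B] [StarModule ℂ B]
  [Module.Finite ℂ B] [Module.Free ℂ B]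

/-- The multiplication map `m : B ⊗ B → B`. -/
abbrev mulMap (B : Type*) [Ring B] [Algebra ℂ B] : B ⊗[ℂ] B →ₗ[ℂ] B := LinearMap.mul' ℂ B

/-- `ψ ⊗ ψ` as a functional on `B ⊗ B`. -/
def psi2 (ψ : B →ₗ[ℂ] ℂ) : B ⊗[ℂ] B →ₗ[ℂ] ℂ :=
  (TensorProduct.lid ℂ ℂ).toLinearMap ∘ₗ TensorProduct.map ψ ψ

/-- `ψ ⊗ id : B ⊗ B → B`. -/
def psiOne (ψ : B →ₗ[ℂ] ℂ) : B ⊗[ℂ] B →ₗ[ℂ] B :=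
  (TensorProduct.lid ℂ B).toLinearMap ∘ₗ TensorProduct.map ψ LinearMap.id

/-- `ψ` is a faithful state. -/
def IsState (ψ : B →ₗ[ℂ] ℂ) : Prop :=
  ψ 1 = 1 ∧ (∀ x : B, 0 ≤ (ψ (star x * x)).re ∧ (ψ (star x * x)).im = 0) ∧
    ∀ x : B, ψ (star x * x) = 0 → x = 0

/-- `mstar` is the adjoint of multiplication w.r.t. the GNS inner products of `ψ`:
`⟪y ⊗ z, m*(x)⟫_{ψ⊗ψ} = ⟪y * z, x⟫_ψ`. -/
def IsAdjointMul (ψ : B →ₗ[ℂ] ℂ) (mstar : B →ₗ[ℂ] B ⊗[ℂ] B) : Prop :=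
  ∀ x y z : B, psi2 ψ ((star y ⊗ₜ[ℂ] star z) * mstar x) = ψ (star (y * z) * x)

/-- `ψ` is a `δ`-form: `m m* = δ² id`. -/
def IsDeltaForm (mstar : B →ₗ[ℂ] B ⊗[ℂ] B) (δ : ℝ) : Prop :=
  ∀ x : B, mulMap B (mstar x) = ((δ : ℂ)^2) • x

/-- `A` is a quantum adjacency matrix: `m (A ⊗ A) m* = δ² A`. -/
def IsQAdj (mstar : B →ₗ[ℂ] B ⊗[ℂ] B) (δ : ℝ) (A : B →ₗ[ℂ] B) : Prop :=
  ∀ x : B, mulMap B (TensorProduct.map A A (mstar x)) = ((δ : ℂ)^2) • A x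

/-- The quantum edge indicator `ε = (1/δ²)(1 ⊗ A) m*(1)`. -/
def edgeInd (mstar : B →ₗ[ℂ] B ⊗[ℂ] B) (δ : ℝ) (A : B →ₗ[ℂ] B) : B ⊗[ℂ] B :=
  (((δ : ℂ)^2)⁻¹) • (LinearMap.lTensor B A) (mstar 1)

/-- The `#`-multiplication on `B ⊗ B`: `(a⊗b)#(c⊗d) = (ac)⊗(db)` (i.e. `B ⊗ Bᵒᵖ`). -/
def hashMul (ξ η : B ⊗[ℂ] B) : B ⊗[ℂ] B :=
  (TensorProduct.congr (LinearEquiv.refl ℂ B) (MulOpposite.opLinearEquiv ℂ (M := B))).symm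
    ((TensorProduct.congr (LinearEquiv.refl ℂ B) (MulOpposite.opLinearEquiv ℂ (M := B))) ξ *
      (TensorProduct.congr (LinearEquiv.refl ℂ B) (MulOpposite.opLinearEquiv ℂ (M := B))) η)

/-- The (conjugate-linear) star operation on `B ⊗ B`, `star (a ⊗ b) = star a ⊗ star b`,
defined via a choice of basis. -/
def starT (ξ : B ⊗[ℂ] B) : B ⊗[ℂ] B :=
  ∑ p : Module.Free.ChooseBasisIndex ℂ B × Module.Free.ChooseBasisIndex ℂ B,
    (starRingEnd ℂ)
      (((Module.Free.chooseBasis ℂ B).tensorProduct (Module.Free.chooseBasis ℂ B)).repr ξ p) •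
      (star ((Module.Free.chooseBasis ℂ B) p.1) ⊗ₜ[ℂ] star ((Module.Free.chooseBasis ℂ B) p.2))

/-- The `B`-valued inner product on `B ⊗ B`: `⟨a⊗b, c⊗d⟩_B = ψ(a*c) b* d`. -/
def bip (ψ : B →ₗ[ℂ] ℂ) (ξ η : B ⊗[ℂ] B) : B := psiOne ψ (starT ξ * η)

/-- Positivity in a star ring. -/
def IsPosEl {R : Type*} [Ring R] [StarRing R] (x : R) : Prop := ∃ y, x = star y * y

/-- Complete positivity of a linear map on `B`. -/
def IsCP (A : B →ₗ[ℂ] B) : Prop :=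
  ∀ (n : ℕ) (M : Matrix (Fin n) (Fin n) B), IsPosEl M → IsPosEl (M.map A)

/-- The map `A_ξ : x ↦ δ² (ψ ⊗ 1)(x · ξ)`. -/
def Axi (ψ : B →ₗ[ℂ] ℂ) (δ : ℝ) (ξ : B ⊗[ℂ] B) : B →ₗ[ℂ] B :=
  ((δ : ℂ)^2) • ((psiOne ψ) ∘ₗ ((LinearMap.mul ℂ (B ⊗[ℂ] B)).flip ξ) ∘ₗ
    (Algebra.TensorProduct.includeLeft : B →ₐ[ℂ] B ⊗[ℂ] B).toLinearMap)

/-- The quantum edge correspondence `E_G = B · ε_G · B` as a subspace of `B ⊗ B`. -/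
def EGspan (mstar : B →ₗ[ℂ] B ⊗[ℂ] B) (δ : ℝ) (A : B →ₗ[ℂ] B) : Submodule ℂ (B ⊗[ℂ] B) :=
  Submodule.span ℂ
    {z : B ⊗[ℂ] B | ∃ x y : B, z = (x ⊗ₜ[ℂ] (1 : B)) * edgeInd mstar δ A * ((1 : B) ⊗ₜ[ℂ] y)}


private lemma psi2_tmul' (ψ : B →ₗ[ℂ] ℂ) (a b : B) : psi2 ψ (a ⊗ₜ[ℂ] b) = ψ a * ψ b := by
  simp [psi2, smul_eq_mul]

private lemma psiOne_tmul' (ψ : B →ₗ[ℂ] ℂ) (a b : B) : psiOne ψ (a ⊗ₜ[ℂ] b) = ψ a • b := by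
  simp [psiOne]

private lemma aux_L1 (ψ : B →ₗ[ℂ] ℂ) (c : B) (ξ : B ⊗[ℂ] B) :
    ψ (c * psiOne ψ ξ) = psi2 ψ (((1 : B) ⊗ₜ[ℂ] c) * ξ) := by
  induction ξ using TensorProduct.induction_on with
  | zero => simp
  | tmul a b =>
      simp [psiOne_tmul', psi2_tmul', Algebra.TensorProduct.tmul_mul_tmul, mul_smul_comm,
        mul_comm]
  | add u v hu hv => simp [mul_add, map_add, hu, hv]

private lemma aux_L2 (A : B →ₗ[ℂ] B) (x : B) (ξ : B ⊗[ℂ] B) :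
    (x ⊗ₜ[ℂ] (1 : B)) * (LinearMap.lTensor B A) ξ
      = (LinearMap.lTensor B A) ((x ⊗ₜ[ℂ] (1 : B)) * ξ) := by
  induction ξ using TensorProduct.induction_on with
  | zero => simp
  | tmul a b => simp [Algebra.TensorProduct.tmul_mul_tmul]
  | add u v hu hv => simp [mul_add, map_add, hu, hv]

private lemma aux_L3 (ψ : B →ₗ[ℂ] ℂ) (A : B →ₗ[ℂ] B) (ξ : B ⊗[ℂ] B) :
    psiOne ψ ((LinearMap.lTensor B A) ξ) = A (psiOne ψ ξ) := by
  induction ξ using TensorProduct.induction_on with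
  | zero => simp
  | tmul a b => simp [psiOne_tmul']
  | add u v hu hv => simp [map_add, hu, hv]

/-- `A(x) = δ² (ψ ⊗ id)(x · ε_G)`. -/
theorem stmt_5 {B : Type*} [Ring B] [StarRing B] [Algebra ℂ B] [StarModule ℂ B]
    [Module.Finite ℂ B] [Module.Free ℂ B]
    (ψ : B →ₗ[ℂ] ℂ) (hψ : IsState ψ)
    (mstar : B →ₗ[ℂ] B ⊗[ℂ] B) (hadj : IsAdjointMul ψ mstar)
    (δ : ℝ) (hδ : 0 < δ) (hdelta : IsDeltaForm mstar δ)
    (A : B →ₗ[ℂ] B) (hA : IsQAdj mstar δ A) (x : B) :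
    A x = ((δ : ℂ)^2) • psiOne ψ ((x ⊗ₜ[ℂ] (1 : B)) * edgeInd mstar δ A) := by
  have hne : ((δ : ℂ)^2) ≠ 0 := pow_ne_zero _ (Complex.ofReal_ne_zero.mpr (ne_of_gt hδ))
  rw [edgeInd, mul_smul_comm, map_smul, smul_smul, mul_inv_cancel₀ hne, one_smul,
    aux_L2, aux_L3]
  have key : psiOne ψ ((x ⊗ₜ[ℂ] (1 : B)) * mstar 1) = x := by
    have nd : ∀ b : B, (∀ z : B, ψ (star z * b) = 0) → b = 0 := fun b h => hψ.2.2 b (h b)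
    have h0 : ∀ z : B, ψ (star z * (psiOne ψ ((x ⊗ₜ[ℂ] (1 : B)) * mstar 1) - x)) = 0 := by
      intro z
      have h1 := aux_L1 ψ (star z) ((x ⊗ₜ[ℂ] (1 : B)) * mstar 1)
      have h2 : ((1 : B) ⊗ₜ[ℂ] star z) * ((x ⊗ₜ[ℂ] (1 : B)) * mstar 1)
          = (x ⊗ₜ[ℂ] star z) * mstar 1 := by
        rw [← mul_assoc, Algebra.TensorProduct.tmul_mul_tmul, one_mul, mul_one]
      have h3 := hadj 1 (star x) z
      rw [star_star] at h3
      have h4 : ψ (star z * psiOne ψ ((x ⊗ₜ[ℂ] (1 : B)) * mstar 1)) = ψ (star z * x) := by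
        rw [h1, h2, h3, star_mul, star_star, mul_one]
      simp [mul_sub, map_sub, h4]
    have := nd _ h0
    exact sub_eq_zero.mp this
  rw [key]

end
end
end

section
/- Let G = (B,ψ,A) be a quantum graph with δ-form ψ and completely positive A, and E_G = B·ε_G·B the quantum edge correspondence. Then {x ∈ B : x·ξ = 0 for all ξ ∈ E_G} equals the orthogonal complement (with respect to the ψ-inner product) of the subspace B A*(B) B, where A* is the adjoint of A with respect to the ψ-inner product. -/
/-!
Since `m*` is a left `B`-module map, `(x ⊗ 1)(a ⊗ 1) ε_G (1 ⊗ b) = δ⁻² (1 ⊗ A) m*(x a) (1 ⊗ b)`,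
so `x` annihilates `E_G` iff `(1 ⊗ A) m*(x a) = 0` for all `a`. As `ψ` is faithful and `B` is
finite-dimensional, elements of `B ⊗ B` are detected by the pairings `(ψ ⊗ ψ)((c* ⊗ d*) ·)`, and
these send `(1 ⊗ A) m*(y)` to `ψ((c A*(d))* y)`. Faithfulness once more turns both
`ψ((c A*(d))* x a) = 0 ∀ a` and `ψ((a A*(b) c)* x) = 0 ∀ c` into `x* a A*(b) = 0`.
-/

open scoped TensorProduct
open TensorProduct

noncomputable section


open scoped TensorProduct
open TensorProduct

noncomputable section

variable {B : Type*} [Ring B] [StarRing B] [Algebra ℂ B] [StarModule ℂ B]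
  [Module.Finite ℂ B] [Module.Free ℂ B]

open LinearMap

theorem TensorProduct.eq_zero_of_forall_dualDistrib_tmul_eq_zero {R M N : Type*} [CommRing R]
    [AddCommGroup M] [AddCommGroup N] [Module R M] [Module R N] [Module.Finite R M]
    [Module.Free R M] [Module.Finite R N] [Module.Free R N] {z : M ⊗[R] N}
    (h : ∀ f g, dualDistrib R M N (f ⊗ₜ g) z = 0) : z = 0 := by
  refine (Module.forall_dual_apply_eq_zero_iff R z).1 fun φ => ?_
  obtain ⟨w, rfl⟩ := (dualDistribEquiv R M N).surjective φ
  induction w using TensorProduct.induction_on with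
  | zero => simp
  | tmul f g => exact h f g
  | add w₁ w₂ h₁ h₂ => rw [map_add, LinearMap.add_apply, h₁, h₂, add_zero]

theorem tmul_one_mul_lTensor {B : Type*} [Ring B] [Algebra ℂ B] (A : B →ₗ[ℂ] B) (y : B)
    (w : B ⊗[ℂ] B) :
    (y ⊗ₜ[ℂ] (1 : B)) * lTensor B A w = lTensor B A ((y ⊗ₜ[ℂ] (1 : B)) * w) := by
  induction w using TensorProduct.induction_on with
  | zero => simp
  | tmul u v => simp [Algebra.TensorProduct.tmul_mul_tmul]
  | add w₁ w₂ h₁ h₂ => simp [mul_add, h₁, h₂]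

theorem dualDistrib_mul_compr₂_tmul {R : Type*} [Ring R] [Algebra ℂ R] (ψ : R →ₗ[ℂ] ℂ)
    (c d : R) (z : R ⊗[ℂ] R) :
    dualDistrib ℂ R R ((LinearMap.mul ℂ R).compr₂ ψ c ⊗ₜ (LinearMap.mul ℂ R).compr₂ ψ d) z =
      psi2 ψ ((c ⊗ₜ[ℂ] d) * z) := by
  induction z using TensorProduct.induction_on with
  | zero => simp
  | tmul x y => simp [psi2, Algebra.TensorProduct.tmul_mul_tmul]
  | add z₁ z₂ h₁ h₂ => simp [mul_add, h₁, h₂]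

section StarFunctional

variable {R : Type*} [Ring R] [StarRing R] [Algebra ℂ R] {ψ : R →ₗ[ℂ] ℂ}

theorem apply_star_mul_eq_conj [StarModule ℂ R] (him : ∀ z : R, (ψ (star z * z)).im = 0)
    (u v : R) : ψ (star u * v) = starRingEnd ℂ (ψ (star v * u)) := by
  have h₁ := him (u + v)
  have h₂ := him (u + Complex.I • v)
  simp only [star_add, star_smul, add_mul, mul_add, smul_mul_assoc, mul_smul_comm, map_add,
    map_smul, smul_eq_mul, RCLike.star_def, Complex.conj_I, him, Complex.add_im, Complex.neg_im,
    Complex.mul_im, Complex.I_re, Complex.I_im, neg_mul, one_mul, zero_mul, zero_add, add_zero,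
    Complex.mul_re, mul_neg, mul_zero, sub_self, neg_zero] at h₁ h₂
  apply Complex.ext <;> simp only [Complex.conj_re, Complex.conj_im] <;> linarith

theorem forall_apply_star_mul_eq_zero_iff (hf : ∀ x : R, ψ (star x * x) = 0 → x = 0) (w : R) :
    (∀ a, ψ (star a * w) = 0) ↔ w = 0 :=
  ⟨fun h => hf w (h w), fun h a => by simp [h]⟩

theorem forall_apply_star_mul_eq_zero_iff' (hf : ∀ x : R, ψ (star x * x) = 0 → x = 0) (w : R) :
    (∀ a, ψ (star w * a) = 0) ↔ w = 0 :=
  ⟨fun h => hf w (h w), fun h a => by simp [h]⟩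

theorem surjective_mul_compr₂ [FiniteDimensional ℂ R]
    (hf : ∀ x : R, ψ (star x * x) = 0 → x = 0) :
    Function.Surjective ((LinearMap.mul ℂ R).compr₂ ψ) := by
  refine (injective_iff_surjective_of_finrank_eq_finrank Subspace.dual_finrank_eq.symm).1 ?_
  rw [← ker_eq_bot, ker_eq_bot']
  intro d hd
  have : star d = 0 := hf _ (by simpa using congr($hd (star d)))
  simpa using congr(star $this)

theorem eq_zero_of_forall_psi2_star_tmul_mul_eq_zero [FiniteDimensional ℂ R]
    (hf : ∀ x : R, ψ (star x * x) = 0 → x = 0) {z : R ⊗[ℂ] R}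
    (h : ∀ c d : R, psi2 ψ ((star c ⊗ₜ[ℂ] star d) * z) = 0) : z = 0 := by
  refine TensorProduct.eq_zero_of_forall_dualDistrib_tmul_eq_zero fun f g => ?_
  obtain ⟨c, rfl⟩ := surjective_mul_compr₂ hf f
  obtain ⟨d, rfl⟩ := surjective_mul_compr₂ hf g
  simpa [dualDistrib_mul_compr₂_tmul] using h (star c) (star d)

end StarFunctional

section QuantumGraph

variable {B : Type*} [Ring B] [StarRing B] [Algebra ℂ B] {ψ : B →ₗ[ℂ] ℂ}
  {mstar : B →ₗ[ℂ] B ⊗[ℂ] B} {A Astar : B →ₗ[ℂ] B}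

theorem tmul_one_mul_mstar_one [FiniteDimensional ℂ B]
    (hf : ∀ x : B, ψ (star x * x) = 0 → x = 0) (hadj : IsAdjointMul ψ mstar) (y : B) :
    (y ⊗ₜ[ℂ] (1 : B)) * mstar 1 = mstar y := by
  rw [← sub_eq_zero]
  refine eq_zero_of_forall_psi2_star_tmul_mul_eq_zero hf fun c d => ?_
  rw [mul_sub, map_sub, ← mul_assoc, Algebra.TensorProduct.tmul_mul_tmul, mul_one,
    ← star_star y, ← star_mul, hadj, hadj, star_star, sub_eq_zero]
  simp only [star_mul, star_star, mul_one, mul_assoc]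

theorem psi2_star_tmul_mul_lTensor [StarModule ℂ B] (him : ∀ z : B, (ψ (star z * z)).im = 0)
    (hAstar : ∀ x y : B, ψ (star (A x) * y) = ψ (star x * Astar y)) (c d : B) (w : B ⊗[ℂ] B) :
    psi2 ψ ((star c ⊗ₜ[ℂ] star d) * lTensor B A w) =
      psi2 ψ ((star c ⊗ₜ[ℂ] star (Astar d)) * w) := by
  induction w using TensorProduct.induction_on with
  | zero => simp
  | tmul x y =>
    simp only [lTensor_tmul, Algebra.TensorProduct.tmul_mul_tmul, psi2, LinearMap.comp_apply,
      map_tmul, LinearEquiv.coe_coe, lid_tmul, smul_eq_mul]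
    rw [apply_star_mul_eq_conj him d, hAstar, ← apply_star_mul_eq_conj him]
  | add w₁ w₂ h₁ h₂ => simp [mul_add, h₁, h₂]

theorem lTensor_mstar_eq_zero_iff [StarModule ℂ B] [FiniteDimensional ℂ B]
    (him : ∀ z : B, (ψ (star z * z)).im = 0) (hf : ∀ x : B, ψ (star x * x) = 0 → x = 0)
    (hadj : IsAdjointMul ψ mstar)
    (hAstar : ∀ x y : B, ψ (star (A x) * y) = ψ (star x * Astar y)) (y : B) :
    lTensor B A (mstar y) = 0 ↔ ∀ c d : B, ψ (star (c * Astar d) * y) = 0 := by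
  have hpair (c d : B) : psi2 ψ ((star c ⊗ₜ[ℂ] star d) * lTensor B A (mstar y)) =
      ψ (star (c * Astar d) * y) := by
    rw [psi2_star_tmul_mul_lTensor him hAstar, hadj]
  refine ⟨fun h c d => by rw [← hpair, h, mul_zero, map_zero], fun h => ?_⟩
  exact eq_zero_of_forall_psi2_star_tmul_mul_eq_zero hf fun c d => by rw [hpair, h]

theorem tmul_one_mul_edgeInd [FiniteDimensional ℂ B] (hf : ∀ x : B, ψ (star x * x) = 0 → x = 0)
    (hadj : IsAdjointMul ψ mstar) (δ : ℝ) (y : B) :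
    (y ⊗ₜ[ℂ] (1 : B)) * edgeInd mstar δ A = ((δ : ℂ) ^ 2)⁻¹ • lTensor B A (mstar y) := by
  rw [edgeInd, mul_smul_comm, tmul_one_mul_lTensor, tmul_one_mul_mstar_one hf hadj]

end QuantumGraph

theorem stmt_13_general {B : Type*} [Ring B] [StarRing B] [Algebra ℂ B] [StarModule ℂ B]
    [Module.Finite ℂ B]
    (ψ : B →ₗ[ℂ] ℂ) (hψ : IsState ψ)
    (mstar : B →ₗ[ℂ] B ⊗[ℂ] B) (hadj : IsAdjointMul ψ mstar)
    (δ : ℝ) (hδ : 0 < δ) (A : B →ₗ[ℂ] B) (Astar : B →ₗ[ℂ] B)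
    (hAstar : ∀ x y : B, ψ (star (A x) * y) = ψ (star x * Astar y)) :
    ∀ x : B,
      (∀ a b : B,
        (x ⊗ₜ[ℂ] (1 : B)) * ((a ⊗ₜ[ℂ] (1 : B)) * edgeInd mstar δ A * ((1 : B) ⊗ₜ[ℂ] b)) = 0) ↔
      (∀ a b c : B, ψ (star (a * Astar b * c) * x) = 0) := by
  obtain ⟨-, hpos, hf⟩ := hψ
  have hδ₂ : ((δ : ℂ) ^ 2)⁻¹ ≠ 0 := by simp [hδ.ne']
  intro x
  have hact (a b : B) : (x ⊗ₜ[ℂ] (1 : B)) * ((a ⊗ₜ[ℂ] (1 : B)) * edgeInd mstar δ A * (1 ⊗ₜ b)) =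
      ((δ : ℂ) ^ 2)⁻¹ • (lTensor B A (mstar (x * a)) * (1 ⊗ₜ b)) := by
    rw [← mul_assoc, ← mul_assoc, Algebra.TensorProduct.tmul_mul_tmul, mul_one,
      tmul_one_mul_edgeInd hf hadj, smul_mul_assoc]
  calc (∀ a b : B, (x ⊗ₜ[ℂ] (1 : B)) * ((a ⊗ₜ[ℂ] (1 : B)) * edgeInd mstar δ A * (1 ⊗ₜ b)) = 0)
      ↔ ∀ a, lTensor B A (mstar (x * a)) = 0 := by
        simp_rw [hact]
        refine ⟨fun h a => ?_, fun h a b => by simp [h]⟩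
        simpa [hδ₂, ← Algebra.TensorProduct.one_def] using h a 1
    _ ↔ ∀ c d : B, star x * c * Astar d = 0 := by
        simp_rw [lTensor_mstar_eq_zero_iff (fun z => (hpos z).2) hf hadj hAstar,
          ← forall_apply_star_mul_eq_zero_iff' hf]
        simp only [star_mul, star_star, mul_assoc]
        exact ⟨fun h c d a => h a c d, fun h a c d => h c d a⟩
    _ ↔ ∀ a b c : B, ψ (star (a * Astar b * c) * x) = 0 := by
        simp_rw [← star_eq_zero (x := star x * _ * _), ← forall_apply_star_mul_eq_zero_iff hf]
        simp only [star_mul, star_star, mul_assoc]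

/-- `{x : x·ξ = 0 for all ξ ∈ E_G}` is the orthogonal complement of `B A*(B) B`
with respect to the ψ-inner product. -/
theorem stmt_13 {B : Type*} [Ring B] [StarRing B] [Algebra ℂ B] [StarModule ℂ B]
    [Module.Finite ℂ B] [Module.Free ℂ B]
    (ψ : B →ₗ[ℂ] ℂ) (hψ : IsState ψ)
    (mstar : B →ₗ[ℂ] B ⊗[ℂ] B) (hadj : IsAdjointMul ψ mstar)
    (δ : ℝ) (hδ : 0 < δ) (hdelta : IsDeltaForm mstar δ)
    (A : B →ₗ[ℂ] B) (hA : IsQAdj mstar δ A) (hcp : IsCP A)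
    (Astar : B →ₗ[ℂ] B)
    (hAstar : ∀ x y : B, ψ (star (A x) * y) = ψ (star x * Astar y)) :
    ∀ x : B,
      (∀ a b : B,
        (x ⊗ₜ[ℂ] (1 : B)) * ((a ⊗ₜ[ℂ] (1 : B)) * edgeInd mstar δ A * ((1 : B) ⊗ₜ[ℂ] b)) = 0) ↔
      (∀ a b c : B, ψ (star (a * Astar b * c) * x) = 0) :=
  stmt_13_general ψ hψ mstar hadj δ hδ A Astar hAstar
end
end
end

section
/- Let G = (C(V), ψ, A) be a classical finite directed graph with N = |V| vertices, viewed as a quantum graph with ψ the uniform state and A the adjacency-matrix map. If s : C(V) → D is a linear map into a unital C*-algebra D satisfying the quantum Cuntz–Krieger relations (QCK1)–(QCK3), then the elements S_v := N·s(p_v) are partial isometries with mutually orthogonal range projections summing to 1_D, satisfying the Cuntz–Krieger relations S_v* S_v = Σ_w A(v,w) S_w S_w*. -/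
open scoped TensorProduct
open TensorProduct

noncomputable section


open scoped TensorProduct
open TensorProduct

noncomputable section

variable {B : Type*} [Ring B] [StarRing B] [Algebra ℂ B] [StarModule ℂ B]
  [Module.Finite ℂ B] [Module.Free ℂ B]

/-- For a classical graph on `N = |V|` vertices (`Adj w v` meaning an edge `w → v`, so the
quantum adjacency map is `A p_v = ∑_{w → v} p_w`), a quantum Cuntz–Krieger family
`s : C(V) → D` (relations (QCK1)–(QCK3), written on the basis `p_v` of minimal projections)
gives partial isometries `S_v := N · s(p_v)` with mutually orthogonal range projections
summing to `1` and satisfying the Cuntz–Krieger relations. -/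
theorem stmt_16 {V : Type*} [Fintype V] [DecidableEq V] [Nonempty V]
    (Adj : V → V → Prop) [∀ v w, Decidable (Adj v w)]
    {D : Type*} [NormedRing D] [StarRing D] [CStarRing D] [NormedAlgebra ℂ D]
    [CompleteSpace D] [StarModule ℂ D]
    (s : (V → ℂ) →ₗ[ℂ] D)
    (hQCK1 : ∀ v : V,
      ((Fintype.card V : ℂ)^2) •
        (s (Pi.single v 1) * star (s (Pi.single v 1)) * s (Pi.single v 1)) = s (Pi.single v 1))
    (hQCK2 : ∀ v : V,
      star (s (Pi.single v 1)) * s (Pi.single v 1) =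
        ∑ w, if Adj w v then s (Pi.single w 1) * star (s (Pi.single w 1)) else 0)
    (hQCK3 : (Fintype.card V : ℂ) • ∑ v, s (Pi.single v 1) * star (s (Pi.single v 1)) =
      ((Fintype.card V : ℂ))⁻¹ • 1) :
    (∀ v : V, ((Fintype.card V : ℂ) • s (Pi.single v 1)) *
        star ((Fintype.card V : ℂ) • s (Pi.single v 1)) *
        ((Fintype.card V : ℂ) • s (Pi.single v 1)) =
        (Fintype.card V : ℂ) • s (Pi.single v 1)) ∧
    (∀ v w : V, v ≠ w →
      (((Fintype.card V : ℂ) • s (Pi.single v 1)) *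
          star ((Fintype.card V : ℂ) • s (Pi.single v 1))) *
        (((Fintype.card V : ℂ) • s (Pi.single w 1)) *
          star ((Fintype.card V : ℂ) • s (Pi.single w 1))) = 0) ∧
    (∑ v, ((Fintype.card V : ℂ) • s (Pi.single v 1)) *
        star ((Fintype.card V : ℂ) • s (Pi.single v 1)) = 1) ∧
    (∀ v : V,
      star ((Fintype.card V : ℂ) • s (Pi.single v 1)) *
          ((Fintype.card V : ℂ) • s (Pi.single v 1)) =
        ∑ w, if Adj w v then
          ((Fintype.card V : ℂ) • s (Pi.single w 1)) *
            star ((Fintype.card V : ℂ) • s (Pi.single w 1)) else 0) := by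
  classical
  set N : ℂ := (Fintype.card V : ℂ) with hN
  have hN0 : N ≠ 0 := Nat.cast_ne_zero.mpr Fintype.card_ne_zero
  have hstarN : star N = N := by simp [hN]
  set P : V → D := fun u => (N ^ 2) • (s (Pi.single u 1) * star (s (Pi.single u 1))) with hPdef
  have hP' : ∀ u, (N • s (Pi.single u 1)) * star (N • s (Pi.single u 1)) = P u := by
    intro u
    simp only [hPdef]
    rw [star_smul, hstarN, smul_mul_smul_comm, sq]
  have hproj : ∀ u, P u * P u = P u := by
    intro u
    simp only [hPdef]
    rw [smul_mul_smul_comm,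
      ← mul_assoc (s (Pi.single u 1) * star (s (Pi.single u 1))) (s (Pi.single u 1)),
      ← smul_smul, ← smul_mul_assoc, hQCK1 u]
  have hsadj : ∀ u, star (P u) = P u := by
    intro u
    simp only [hPdef]
    rw [star_smul, star_mul, star_star, star_pow, hstarN]
  have hsum : ∑ u, P u = 1 := by
    simp only [hPdef]
    rw [← Finset.smul_sum, sq, ← smul_smul, hQCK3, smul_smul, mul_inv_cancel₀ hN0, one_smul]
  letI : CStarAlgebra D :=
    { ‹NormedRing D›, ‹StarRing D›, ‹CStarRing D›, ‹NormedAlgebra ℂ D›, ‹CompleteSpace D›,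
      ‹StarModule ℂ D› with }
  letI : PartialOrder D := CStarAlgebra.spectralOrder D
  haveI : StarOrderedRing D := CStarAlgebra.spectralOrderedRing D
  have horth : ∀ v w : V, v ≠ w → P v * P w = 0 := by
    intro v w hvw
    have h0 : ∑ u, P w * P u * P w = P w := by
      rw [← Finset.sum_mul, ← Finset.mul_sum, hsum, mul_one, hproj]
    have h2 : P w * P w * P w + ∑ u ∈ Finset.univ.erase w, P w * P u * P w
        = ∑ u, P w * P u * P w :=
      Finset.add_sum_erase _ (fun u => P w * P u * P w) (Finset.mem_univ w)
    rw [h0, hproj, hproj] at h2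
    have key : ∑ u ∈ Finset.univ.erase w, P w * P u * P w = 0 := add_eq_left.mp h2
    have hterm : ∀ u, P w * P u * P w = star (P u * P w) * (P u * P w) := by
      intro u
      rw [star_mul, hsadj, hsadj, mul_assoc (P w) (P u) (P u * P w),
        ← mul_assoc (P u) (P u) (P w), hproj, ← mul_assoc]
    have hmem : v ∈ Finset.univ.erase w := Finset.mem_erase.mpr ⟨hvw, Finset.mem_univ v⟩
    have hnonneg : ∀ u ∈ Finset.univ.erase w, (0 : D) ≤ P w * P u * P w := by
      intro u _
      rw [hterm u]
      exact star_mul_self_nonneg _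
    have hz := (Finset.sum_eq_zero_iff_of_nonneg hnonneg).mp key v hmem
    rw [hterm v] at hz
    exact CStarRing.star_mul_self_eq_zero_iff _ |>.mp hz
  refine ⟨?_, ?_, ?_, ?_⟩
  · intro v
    rw [star_smul, hstarN, smul_mul_smul_comm, smul_mul_smul_comm,
      show N * N * N = N * N ^ 2 by ring, ← smul_smul, hQCK1 v]
  · intro v w hvw
    rw [hP', hP']
    exact horth v w hvw
  · simp only [hP']
    exact hsum
  · intro v
    rw [star_smul, hstarN, smul_mul_smul_comm, ← sq, hQCK2 v, Finset.smul_sum]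
    refine Finset.sum_congr rfl fun w _ => ?_
    rw [smul_ite, smul_zero, hP']

end
end
end

section
/- Let (B,ψ) be a finite quantum space with δ-form ψ. Any local quantum Cuntz–Krieger G-family s : B → D for a quantum graph G = (B,ψ,A) is also a quantum Cuntz–Krieger G-family; that is, the relations (LQCK1) μ(μ⊗1)(s⊗s*⊗s)(m*⊗1) = (1/δ²) s m, (LQCK2) μ(s*⊗s) = (1/δ²) μ(s⊗s*)m*Am, and (LQCK3) μ(s⊗s*)m*(1)=(1/δ²)1 together imply (QCK1) μ(μ⊗1)(s⊗s*⊗s)(m*⊗1)m* = s and (QCK2) μ(s*⊗s)m* = μ(s⊗s*)m*A. -/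
open scoped TensorProduct
open TensorProduct

noncomputable section


open scoped TensorProduct
open TensorProduct

noncomputable section

variable {B : Type*} [Ring B] [StarRing B] [Algebra ℂ B] [StarModule ℂ B]
  [Module.Finite ℂ B] [Module.Free ℂ B]

/-- `μ_D ∘ (s ⊗ t) : B ⊗ B → D`. -/
def twoMul {D : Type*} [Ring D] [Algebra ℂ D] (s t : B →ₗ[ℂ] D) : B ⊗[ℂ] B →ₗ[ℂ] D :=
  (LinearMap.mul' ℂ D) ∘ₗ TensorProduct.map s t

/-- `μ_D (μ_D ⊗ 1) ∘ (s ⊗ t ⊗ u) : (B ⊗ B) ⊗ B → D`. -/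
def threeMul {D : Type*} [Ring D] [Algebra ℂ D] (s t u : B →ₗ[ℂ] D) :
    (B ⊗[ℂ] B) ⊗[ℂ] B →ₗ[ℂ] D :=
  (LinearMap.mul' ℂ D) ∘ₗ TensorProduct.map (twoMul s t) u

/-- `s* : b ↦ s(b*)*`, which is again `ℂ`-linear. -/
def sConj {D : Type*} [Ring D] [StarRing D] [Algebra ℂ D] [StarModule ℂ D]
    (s : B →ₗ[ℂ] D) : B →ₗ[ℂ] D where
  toFun b := star (s (star b))
  map_add' a b := by simp
  map_smul' c b := by simp [star_smul]


/-- Every local quantum Cuntz–Krieger family is a quantum Cuntz–Krieger family: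
(LQCK1)–(LQCK3) imply (QCK1) and (QCK2). -/
theorem stmt_17 {B : Type*} [Ring B] [StarRing B] [Algebra ℂ B] [StarModule ℂ B]
    [Module.Finite ℂ B] [Module.Free ℂ B]
    (ψ : B →ₗ[ℂ] ℂ) (hψ : IsState ψ)
    (mstar : B →ₗ[ℂ] B ⊗[ℂ] B) (hadj : IsAdjointMul ψ mstar)
    (δ : ℝ) (hδ : 0 < δ) (hdelta : IsDeltaForm mstar δ)
    (A : B →ₗ[ℂ] B) (hA : IsQAdj mstar δ A)
    {D : Type*} [NormedRing D] [StarRing D] [CStarRing D] [NormedAlgebra ℂ D]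
    [CompleteSpace D] [StarModule ℂ D]
    (s : B →ₗ[ℂ] D)
    (hLQCK1 : ∀ ξ : B ⊗[ℂ] B,
      threeMul s (sConj s) s ((LinearMap.rTensor B mstar) ξ) =
        (((δ : ℂ)^2)⁻¹) • s (mulMap B ξ))
    (hLQCK2 : ∀ ξ : B ⊗[ℂ] B,
      twoMul (sConj s) s ξ =
        (((δ : ℂ)^2)⁻¹) • twoMul s (sConj s) (mstar (A (mulMap B ξ))))
    (hLQCK3 : twoMul s (sConj s) (mstar 1) = (((δ : ℂ)^2)⁻¹) • 1) :
    (∀ x : B, threeMul s (sConj s) s ((LinearMap.rTensor B mstar) (mstar x)) = s x) ∧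
    (∀ x : B, twoMul (sConj s) s (mstar x) = twoMul s (sConj s) (mstar (A x))) := by
  have hne : ((δ : ℂ)^2) ≠ 0 := by
    exact pow_ne_zero _ (by exact_mod_cast hδ.ne')
  constructor
  · intro x
    rw [hLQCK1, hdelta, map_smul, smul_smul, inv_mul_cancel₀ hne, one_smul]
  · intro x
    rw [hLQCK2, hdelta, map_smul, map_smul, map_smul, smul_smul,
      inv_mul_cancel₀ hne, one_smul]

end
end
end
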